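/- Let 0 < h < 1 and let δ_h > 0 satisfy 1/4 + δ_h·tan(arctan(1/(2δ_h)) + δ_h·log h) − δ_h² = 0 with arctan(1/(2δ_h)) + δ_h·log h ∈ (−π/2, π/2). Then μ_h = 1/4 + δ_h². -/

import Mathlib

/-!
Split `[0,1]` at `h`. On `[0,h]` every `u ∈ U_h` is affine, so Cauchy–Schwarz gives
`∫₀ʰ u'² ≥ u(h)²/h = ∫₀ʰ u²/x²`. On `[h,1]` take the solution
`φ(x) = √x cos θ(x)`, `θ(x) = arctan (1/(2δ)) + δ log x`, of the Euler equation
`x² φ'' + (1/4 + δ²) φ = 0`; the angle condition keeps `φ > 0` on `[h,1]`. Its logarithmic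
derivative `g = φ'/φ` solves the Riccati equation `g' + g² = -(1/4 + δ²)/x²`, so Picone's
identity gives `∫ₕ¹ u'² = (1/4 + δ²) ∫ₕ¹ u²/x² + [g u²]ₕ¹ + ∫ₕ¹ (u' - g u)²`.
Here `g(1) = 0`, and the equation defining `δ` says exactly `g(h) = (3/4 - δ²)/h`, so the
boundary term cancels the surplus of the affine part: `∫₀¹ u'² - (1/4 + δ²) ∫₀¹ u²/x²` is the
Cauchy–Schwarz defect on `[0,h]` plus `∫ₕ¹ (u' - g u)²`. Both vanish for `φ` continued
linearly on `[0,h]`, so the infimum is attained there.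
-/

open MeasureTheory Real Set Filter

noncomputable section

/-- `u ∈ H¹(0,1)` with weak derivative `u'`: `u` is continuous on `[0,1]`,
`u'` is (square-)integrable on `(0,1)`, and `u(x) = u(0) + ∫₀ˣ u'`. -/
def IsH1 (u u' : ℝ → ℝ) : Prop :=
  ContinuousOn u (Set.Icc 0 1) ∧
  IntervalIntegrable u' volume 0 1 ∧
  IntegrableOn (fun t => u' t ^ 2) (Set.Ioo 0 1) ∧
  ∀ x ∈ Set.Icc (0:ℝ) 1, u x = u 0 + ∫ t in (0:ℝ)..x, u' t

/-- `u ∈ U_h` (with weak derivative `u'`): `u ∈ H¹(0,1)`, `u(0) = 0`, and `u` is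
affine on `[0,h]`, i.e. `u(x) = (x/h)·u(h)` there. -/
def MemUh (h : ℝ) (u u' : ℝ → ℝ) : Prop :=
  IsH1 u u' ∧ u 0 = 0 ∧ ∀ x ∈ Set.Icc (0:ℝ) h, u x = (x / h) * u h

/-- `μ_h`: the infimum of the Hardy Rayleigh quotient over nonzero members of `U_h`. -/
def muh (h : ℝ) : ℝ :=
  sInf { s : ℝ | ∃ u u' : ℝ → ℝ, MemUh h u u' ∧ (∃ x ∈ Set.Icc (0:ℝ) 1, u x ≠ 0) ∧
    s = (∫ x in (0:ℝ)..1, (u' x) ^ 2) / (∫ x in (0:ℝ)..1, (u x) ^ 2 / x ^ 2) }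

theorem integral_deriv_mul_sq_of_eq_add_integral {a b : ℝ} {u w g z : ℝ → ℝ}
    (hw : IntervalIntegrable w volume a b) (hz : IntervalIntegrable z volume a b)
    (hu : ∀ x ∈ uIcc a b, u x = u a + ∫ t in a..x, w t)
    (hg : ∀ x ∈ uIcc a b, g x = g a + ∫ t in a..x, z t) :
    ∫ x in a..b, (z x * u x ^ 2 + 2 * g x * u x * w x) = g b * u b ^ 2 - g a * u a ^ 2 := by
  set U : ℝ → ℝ := fun x => u a + ∫ t in a..x, w t
  set G : ℝ → ℝ := fun x => g a + ∫ t in a..x, z t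
  have hU : AbsolutelyContinuousOnInterval U a b :=
    (LipschitzWith.const (u a)).lipschitzOnWith.absolutelyContinuousOnInterval.add
      (hw.absolutelyContinuousOnInterval_intervalIntegral left_mem_uIcc)
  have hG : AbsolutelyContinuousOnInterval G a b :=
    (LipschitzWith.const (g a)).lipschitzOnWith.absolutelyContinuousOnInterval.add
      (hz.absolutelyContinuousOnInterval_intervalIntegral left_mem_uIcc)
  have hFTC := (hG.mul (hU.mul hU)).integral_deriv_eq_sub
  simp only [Pi.mul_apply, ← hu _ left_mem_uIcc, ← hu _ right_mem_uIcc, ← hg _ left_mem_uIcc,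
    ← hg _ right_mem_uIcc, U, G] at hFTC
  rw [sq, sq, ← hFTC]
  refine intervalIntegral.integral_congr_ae ?_
  filter_upwards [hw.ae_hasDerivAt_integral, hz.ae_hasDerivAt_integral] with x hwx hzx hx
  have hx' := uIoc_subset_uIcc hx
  have hUx : HasDerivAt U (w x) x := (hwx hx' a left_mem_uIcc).const_add _
  have hGx : HasDerivAt G (z x) x := (hzx hx' a left_mem_uIcc).const_add _
  rw [(hGx.mul (hUx.mul hUx)).deriv]
  simp only [Pi.mul_apply, U, G, ← hu x hx', ← hg x hx']
  ring

theorem continuousOn_of_eq_add_integral {a b : ℝ} {u w : ℝ → ℝ}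
    (hw : IntervalIntegrable w volume a b)
    (hu : ∀ x ∈ uIcc a b, u x = u a + ∫ t in a..x, w t) :
    ContinuousOn u (uIcc a b) :=
  (continuousOn_const.add
    (intervalIntegral.continuousOn_primitive_interval' hw left_mem_uIcc)).congr hu

/-- Picone's identity: `w² = V u² + (g u²)' + (w - g u)²` pointwise when `g' = -V - g²`. -/
theorem integral_sq_eq_of_riccati {a b : ℝ} {u w g V : ℝ → ℝ}
    (hw : IntervalIntegrable w volume a b)
    (hw2 : IntervalIntegrable (fun x => w x ^ 2) volume a b)
    (hu : ∀ x ∈ uIcc a b, u x = u a + ∫ t in a..x, w t) (hV : ContinuousOn V (uIcc a b))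
    (hg : ∀ x ∈ uIcc a b, HasDerivAt g (-V x - g x ^ 2) x) :
    ∫ x in a..b, w x ^ 2 = (∫ x in a..b, V x * u x ^ 2) + (g b * u b ^ 2 - g a * u a ^ 2)
      + ∫ x in a..b, (w x - g x * u x) ^ 2 := by
  have hgc : ContinuousOn g (uIcc a b) := fun x hx => (hg x hx).continuousAt.continuousWithinAt
  have huc := continuousOn_of_eq_add_integral hw hu
  have hz : ContinuousOn (fun x => -V x - g x ^ 2) (uIcc a b) := (hV.neg).sub (hgc.pow 2)
  have hg' : ∀ x ∈ uIcc a b, g x = g a + ∫ t in a..x, (-V t - g t ^ 2) := fun x hx => by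
    have hsub := uIcc_subset_uIcc_left hx
    rw [intervalIntegral.integral_eq_sub_of_hasDerivAt (fun y hy => hg y (hsub hy))
      ((hz.mono hsub).intervalIntegrable)]
    ring
  have hboundary := integral_deriv_mul_sq_of_eq_add_integral hw hz.intervalIntegrable hu hg'
  have hVu : IntervalIntegrable (fun x => V x * u x ^ 2) volume a b :=
    (hV.mul (huc.pow 2)).intervalIntegrable
  have hguw : IntervalIntegrable (fun x => 2 * g x * u x * w x) volume a b :=
    hw.continuousOn_mul ((continuousOn_const.mul hgc).mul huc)
  have hzu : IntervalIntegrable (fun x => (-V x - g x ^ 2) * u x ^ 2) volume a b :=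
    (hz.mul (huc.pow 2)).intervalIntegrable
  have hrem : IntervalIntegrable (fun x => (w x - g x * u x) ^ 2) volume a b := by
    convert (hw2.sub hguw).add ((hgc.pow 2).mul (huc.pow 2)).intervalIntegrable using 1
    ext x
    simp only [Pi.mul_apply, Pi.pow_apply]
    ring
  rw [← hboundary, ← intervalIntegral.integral_add hVu (hzu.add hguw),
    ← intervalIntegral.integral_add (hVu.add (hzu.add hguw)) hrem]
  congr 1 with x
  ring

theorem sq_integral_le_mul_integral_sq {a b : ℝ} (hab : a ≤ b) {w : ℝ → ℝ}
    (hw : IntervalIntegrable w volume a b)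
    (hw2 : IntervalIntegrable (fun x => w x ^ 2) volume a b) :
    (∫ x in a..b, w x) ^ 2 ≤ (b - a) * ∫ x in a..b, w x ^ 2 := by
  have hquad : ∀ m : ℝ, 0 ≤ (b - a) * (m * m) + (-2 * ∫ x in a..b, w x) * m
      + ∫ x in a..b, w x ^ 2 := fun m => by
    have hexpand : ∫ x in a..b, (w x - m) ^ 2
        = (∫ x in a..b, w x ^ 2) - 2 * m * (∫ x in a..b, w x) + (b - a) * m ^ 2 := by
      simp only [sub_sq]
      have hlin := hw.const_mul 2 |>.mul_const m
      rw [intervalIntegral.integral_add (hw2.sub hlin) intervalIntegrable_const,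
        intervalIntegral.integral_sub hw2 hlin, intervalIntegral.integral_mul_const,
        intervalIntegral.integral_const_mul, intervalIntegral.integral_const, smul_eq_mul]
      ring
    linarith [hexpand ▸ intervalIntegral.integral_nonneg hab fun x _ => sq_nonneg (w x - m)]
  have hdisc := discrim_le_zero hquad
  rw [discrim] at hdisc
  linarith

namespace IsH1

variable {u u' : ℝ → ℝ} (hu : IsH1 u u')
include hu

theorem intervalIntegrable_deriv_sq : IntervalIntegrable (fun x => u' x ^ 2) volume 0 1 := by
  rw [intervalIntegrable_iff_integrableOn_Ioc_of_le zero_le_one,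
    integrableOn_Ioc_iff_integrableOn_Ioo]
  exact hu.2.2.1

theorem eq_add_integral {a x : ℝ} (ha : a ∈ Icc (0 : ℝ) 1) (hx : x ∈ Icc (0 : ℝ) 1) :
    u x = u a + ∫ t in a..x, u' t := by
  have hI : ∀ y ∈ Icc (0 : ℝ) 1, IntervalIntegrable u' volume 0 y := fun y hy =>
    hu.2.1.mono_set (uIcc_subset_uIcc_left (by rwa [uIcc_of_le zero_le_one]))
  rw [hu.2.2.2 x hx, hu.2.2.2 a ha,
    ← intervalIntegral.integral_interval_sub_left (hI x hx) (hI a ha)]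
  ring

end IsH1

namespace MemUh

variable {h : ℝ} {u u' : ℝ → ℝ} (hu : MemUh h u u')
include hu

theorem sq_div_sq_of_mem_Ioc {x : ℝ} (hx : x ∈ Ioc 0 h) : u x ^ 2 / x ^ 2 = (u h / h) ^ 2 := by
  have hx0 : x ≠ 0 := hx.1.ne'
  have hh0 : h ≠ 0 := (hx.1.trans_le hx.2).ne'
  rw [hu.2.2 x ⟨hx.1.le, hx.2⟩]
  field_simp

theorem integral_div_sq_zero_h (hh0 : 0 < h) : ∫ x in 0..h, u x ^ 2 / x ^ 2 = u h ^ 2 / h := by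
  rw [intervalIntegral.integral_congr_ae (g := fun _ => (u h / h) ^ 2) (ae_of_all _ fun x hx =>
    hu.sq_div_sq_of_mem_Ioc (by rwa [uIoc_of_le hh0.le] at hx)), intervalIntegral.integral_const,
    smul_eq_mul]
  field_simp
  ring

theorem continuousOn_div_sq (hh0 : 0 < h) : ContinuousOn (fun x => u x ^ 2 / x ^ 2) (Icc h 1) :=
  ((hu.1.1.mono (Icc_subset_Icc_left hh0.le)).pow 2).div (continuousOn_pow 2) fun _ hx =>
    pow_ne_zero 2 (hh0.trans_le hx.1).ne'

theorem integral_div_sq_eq_add (hh0 : 0 < h) (hh1 : h ≤ 1) :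
    ∫ x in 0..1, u x ^ 2 / x ^ 2 = u h ^ 2 / h + ∫ x in h..1, u x ^ 2 / x ^ 2 := by
  have hleft : IntervalIntegrable (fun x => u x ^ 2 / x ^ 2) volume 0 h :=
    intervalIntegrable_const.congr fun x hx =>
      (hu.sq_div_sq_of_mem_Ioc (by rwa [uIoc_of_le hh0.le] at hx)).symm
  have hright : IntervalIntegrable (fun x => u x ^ 2 / x ^ 2) volume h 1 :=
    (hu.continuousOn_div_sq hh0).intervalIntegrable_of_Icc hh1
  rw [← intervalIntegral.integral_add_adjacent_intervals hleft hright,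
    hu.integral_div_sq_zero_h hh0]

theorem integral_div_sq_pos (hh0 : 0 < h) (hh1 : h < 1)
    (hnz : ∃ x ∈ Icc (0 : ℝ) 1, u x ≠ 0) :
    0 < ∫ x in 0..1, u x ^ 2 / x ^ 2 := by
  obtain ⟨x, hx, hux⟩ := hnz
  have hc : ∃ c ∈ Icc h 1, u c ≠ 0 := by
    rcases le_or_gt x h with hxh | hxh
    · refine ⟨h, ⟨le_rfl, hh1.le⟩, fun huh => hux ?_⟩
      rw [hu.2.2 x ⟨hx.1, hxh⟩, huh, mul_zero]
    · exact ⟨x, ⟨hxh.le, hx.2⟩, hux⟩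
  obtain ⟨c, hc, huc⟩ := hc
  have htail : 0 < ∫ x in h..1, u x ^ 2 / x ^ 2 :=
    intervalIntegral.integral_pos hh1 (hu.continuousOn_div_sq hh0)
      (fun x _ => by positivity) ⟨c, hc, by have hc0 : c ≠ 0 := (hh0.trans_le hc.1).ne'; positivity⟩
  rw [hu.integral_div_sq_eq_add hh0 hh1.le]
  positivity

theorem sq_div_le_integral_deriv_sq (hh0 : 0 < h) (hh1 : h ≤ 1) :
    u h ^ 2 / h ≤ ∫ x in 0..h, u' x ^ 2 := by
  have hsub : uIcc 0 h ⊆ uIcc 0 1 := uIcc_subset_uIcc_left (by simp [hh0.le, hh1])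
  have hcs := sq_integral_le_mul_integral_sq hh0.le (hu.1.2.1.mono_set hsub)
    (hu.1.intervalIntegrable_deriv_sq.mono_set hsub)
  have hint : ∫ t in 0..h, u' t = u h := by
    rw [hu.1.2.2.2 h ⟨hh0.le, hh1⟩, hu.2.1, zero_add]
  rw [hint, sub_zero] at hcs
  rwa [div_le_iff₀ hh0, mul_comm]

end MemUh

def hardyAngle (δ x : ℝ) : ℝ := arctan (1 / (2 * δ)) + δ * log x

def hardyRiccati (δ x : ℝ) : ℝ := (1 / 2 - δ * tan (hardyAngle δ x)) / x

def hardyGroundState (δ x : ℝ) : ℝ := √x * cos (hardyAngle δ x)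

section GroundState

variable {δ x : ℝ}

theorem hasDerivAt_hardyAngle (hx : x ≠ 0) : HasDerivAt (hardyAngle δ) (δ / x) x :=
  (((hasDerivAt_log hx).const_mul δ).const_add _).congr_deriv (div_eq_mul_inv δ x).symm

theorem hasDerivAt_hardyRiccati (hx : x ≠ 0) (hcos : cos (hardyAngle δ x) ≠ 0) :
    HasDerivAt (hardyRiccati δ) (-((1 / 4 + δ ^ 2) / x ^ 2) - hardyRiccati δ x ^ 2) x := by
  have h := (((hasDerivAt_tan hcos).comp x (hasDerivAt_hardyAngle hx)).const_mul δ).const_sub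
    (1 / 2) |>.div (hasDerivAt_id x) hx
  refine (h : HasDerivAt (hardyRiccati δ) _ x).congr_deriv ?_
  simp only [hardyRiccati, Function.comp, id, tan_eq_sin_div_cos]
  field_simp
  linear_combination 16 * δ ^ 2 * sin_sq_add_cos_sq (hardyAngle δ x)

theorem hasDerivAt_hardyGroundState (hx : 0 < x) (hcos : cos (hardyAngle δ x) ≠ 0) :
    HasDerivAt (hardyGroundState δ) (hardyRiccati δ x * hardyGroundState δ x) x := by
  have h := (hasDerivAt_sqrt hx.ne').mul ((hasDerivAt_hardyAngle (δ := δ) hx.ne').cos)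
  refine (h : HasDerivAt (hardyGroundState δ) _ x).congr_deriv ?_
  have hsq : √x ^ 2 = x := sq_sqrt hx.le
  simp only [hardyRiccati, hardyGroundState, tan_eq_sin_div_cos]
  field_simp
  linear_combination -cos (hardyAngle δ x) * hsq

theorem hardyRiccati_one (hδ : δ ≠ 0) : hardyRiccati δ 1 = 0 := by
  rw [hardyRiccati, hardyAngle, log_one, mul_zero, add_zero, tan_arctan]
  field_simp
  ring

theorem cos_hardyAngle_pos {h : ℝ} (hh0 : 0 < h) (hδ : 0 ≤ δ)
    (hang : hardyAngle δ h ∈ Ioo (-(π / 2)) (π / 2)) (hx : x ∈ Icc h 1) :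
    0 < cos (hardyAngle δ x) := by
  have hlog_le : log h ≤ log x := log_le_log hh0 hx.1
  have hlog_nonpos : log x ≤ 0 := log_nonpos (hh0.le.trans hx.1) hx.2
  refine cos_pos_of_mem_Ioo ⟨?_, ?_⟩ <;> simp only [hardyAngle] at hang ⊢
  · nlinarith [hang.1]
  · nlinarith [arctan_lt_pi_div_two (1 / (2 * δ))]

end GroundState

def hardyExtremal (h δ x : ℝ) : ℝ :=
  if x ≤ h then x / h * hardyGroundState δ h else hardyGroundState δ x

def hardyExtremalDeriv (h δ x : ℝ) : ℝ :=
  if x ≤ h then hardyGroundState δ h / h else hardyRiccati δ x * hardyGroundState δ x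

section Extremal

variable {h δ : ℝ} (hh0 : 0 < h) (hh1 : h < 1) (hδ : 0 ≤ δ)
  (hang : hardyAngle δ h ∈ Ioo (-(π / 2)) (π / 2))
include hh0

theorem hardyExtremal_zero : hardyExtremal h δ 0 = 0 := by
  simp [hardyExtremal, hh0.le]

theorem hardyExtremal_self : hardyExtremal h δ h = hardyGroundState δ h := by
  simp [hardyExtremal, hh0.ne']

theorem continuous_hardyExtremal : Continuous (hardyExtremal h δ) := by
  refine continuous_if_le continuous_id continuous_const (by fun_prop) ?_ fun x hx => ?_
  · refine ContinuousOn.mul (by fun_prop) (continuous_cos.comp_continuousOn ?_)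
    exact continuousOn_const.add (continuousOn_const.mul
      (continuousOn_log.mono fun x hx => (hh0.trans_le hx).ne'))
  · simp [hx, hh0.ne']

include hδ hang

theorem continuousOn_hardyRiccati_mul_hardyGroundState :
    ContinuousOn (fun x => hardyRiccati δ x * hardyGroundState δ x) (Icc h 1) := fun _ hx =>
  have hx0 := hh0.trans_le hx.1
  have hcos := (cos_hardyAngle_pos hh0 hδ hang hx).ne'
  ((hasDerivAt_hardyRiccati hx0.ne' hcos).continuousAt.mul
    (hasDerivAt_hardyGroundState hx0 hcos).continuousAt).continuousWithinAt

include hh1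

theorem intervalIntegrable_hardyExtremalDeriv_pow (n : ℕ) :
    IntervalIntegrable (fun x => hardyExtremalDeriv h δ x ^ n) volume 0 1 := by
  refine (intervalIntegrable_const (c := (hardyGroundState δ h / h) ^ n)).congr (fun x hx => ?_)
    |>.trans (((continuousOn_hardyRiccati_mul_hardyGroundState hh0 hδ hang).pow n
      |>.intervalIntegrable_of_Icc hh1.le).congr fun x hx => ?_)
  · rw [uIoc_of_le hh0.le] at hx
    simp [hardyExtremalDeriv, hx.2]
  · rw [uIoc_of_le hh1.le] at hx
    simp [hardyExtremalDeriv, not_le.2 hx.1]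

theorem hardyExtremal_eq_integral {x : ℝ} (hx : x ∈ Icc (0 : ℝ) 1) :
    hardyExtremal h δ x = ∫ t in 0..x, hardyExtremalDeriv h δ t := by
  have hint := (by simpa using intervalIntegrable_hardyExtremalDeriv_pow hh0 hh1 hδ hang 1 :
    IntervalIntegrable (hardyExtremalDeriv h δ) volume 0 1)
  rw [integral_eq_of_hasDerivAt_off_countable_of_le (hardyExtremal h δ) (hardyExtremalDeriv h δ)
    hx.1 (countable_singleton h) (continuous_hardyExtremal hh0).continuousOn ?_
    (hint.mono_set (uIcc_subset_uIcc_left (by simp [hx.1, hx.2]))), hardyExtremal_zero hh0,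
    sub_zero]
  rintro y ⟨⟨-, hyx⟩, hyh⟩
  rcases lt_or_gt_of_ne hyh with hy | hy
  · have hlin := ((hasDerivAt_id y).div_const h).mul_const (hardyGroundState δ h)
    refine (hlin.congr_of_eventuallyEq ?_).congr_deriv ?_
    · filter_upwards [Iio_mem_nhds hy] with t ht
      simp [hardyExtremal, (show t < h from ht).le]
    · simp [hardyExtremalDeriv, hy.le, div_eq_inv_mul]
  · have hy1 : y ∈ Icc h 1 := ⟨hy.le, hyx.le.trans hx.2⟩
    refine ((hasDerivAt_hardyGroundState (hh0.trans hy)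
      (cos_hardyAngle_pos hh0 hδ hang hy1).ne').congr_of_eventuallyEq ?_).congr_deriv ?_
    · filter_upwards [Ioi_mem_nhds hy] with t ht
      simp [hardyExtremal, not_le.2 (show h < t from ht)]
    · simp [hardyExtremalDeriv, not_le.2 hy]

theorem memUh_hardyExtremal : MemUh h (hardyExtremal h δ) (hardyExtremalDeriv h δ) := by
  refine ⟨⟨(continuous_hardyExtremal hh0).continuousOn, ?_, ?_, fun x hx => ?_⟩,
    hardyExtremal_zero hh0, fun x hx => ?_⟩
  · simpa using intervalIntegrable_hardyExtremalDeriv_pow hh0 hh1 hδ hang 1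
  · exact (intervalIntegrable_iff_integrableOn_Ioo_of_le zero_le_one).1
      (intervalIntegrable_hardyExtremalDeriv_pow hh0 hh1 hδ hang 2)
  · rw [hardyExtremal_zero hh0, zero_add, hardyExtremal_eq_integral hh0 hh1 hδ hang hx]
  · rw [hardyExtremal_self hh0]
    simp [hardyExtremal, hx.2]

theorem hardyGroundState_pos : 0 < hardyGroundState δ h :=
  mul_pos (sqrt_pos.2 hh0) (cos_hardyAngle_pos hh0 hδ hang ⟨le_rfl, hh1.le⟩)

end Extremal

section Hardy

variable {h δ : ℝ} (hh0 : 0 < h) (hh1 : h < 1) (hδ : 0 < δ)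
  (hang : hardyAngle δ h ∈ Ioo (-(π / 2)) (π / 2))
  (heq : 1 / 4 + δ * tan (hardyAngle δ h) - δ ^ 2 = 0)
include hh0 hh1 hδ hang heq

theorem MemUh.integral_deriv_sq_eq {u u' : ℝ → ℝ} (hu : MemUh h u u') :
    ∫ x in 0..1, u' x ^ 2 = (1 / 4 + δ ^ 2) * (∫ x in 0..1, u x ^ 2 / x ^ 2)
      + ((∫ x in 0..h, u' x ^ 2) - u h ^ 2 / h)
      + ∫ x in h..1, (u' x - hardyRiccati δ x * u x) ^ 2 := by
  have hIcc : uIcc h 1 = Icc h 1 := uIcc_of_le hh1.le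
  have hsub : uIcc h 1 ⊆ uIcc 0 1 := uIcc_subset_uIcc_right (by simp [hh0.le, hh1.le])
  have hpicone := integral_sq_eq_of_riccati (a := h) (b := 1) (u := u) (w := u')
    (g := hardyRiccati δ) (V := fun x => (1 / 4 + δ ^ 2) / x ^ 2)
    (hu.1.2.1.mono_set hsub) (hu.1.intervalIntegrable_deriv_sq.mono_set hsub)
    (fun x hx => hu.1.eq_add_integral ⟨hh0.le, hh1.le⟩
      (Icc_subset_Icc_left hh0.le (hIcc ▸ hx)))
    (continuousOn_const.div (continuousOn_pow 2) fun x hx =>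
      pow_ne_zero 2 (hh0.trans_le (hIcc ▸ hx).1).ne')
    (fun x hx => hasDerivAt_hardyRiccati (hh0.trans_le (hIcc ▸ hx).1).ne'
      (cos_hardyAngle_pos hh0 hδ.le hang (hIcc ▸ hx)).ne')
  have hriccati_h : hardyRiccati δ h = (3 / 4 - δ ^ 2) / h := by
    rw [hardyRiccati, show δ * tan (hardyAngle δ h) = δ ^ 2 - 1 / 4 by linarith]
    ring
  have hweight : ∫ x in h..1, (1 / 4 + δ ^ 2) / x ^ 2 * u x ^ 2
      = (1 / 4 + δ ^ 2) * ∫ x in h..1, u x ^ 2 / x ^ 2 := by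
    rw [← intervalIntegral.integral_const_mul]
    congr 1 with x
    ring
  rw [hweight, hardyRiccati_one hδ.ne', hriccati_h] at hpicone
  rw [← intervalIntegral.integral_add_adjacent_intervals (b := h)
      (hu.1.intervalIntegrable_deriv_sq.mono_set
        (uIcc_subset_uIcc_left (by simp [hh0.le, hh1.le])))
      (hu.1.intervalIntegrable_deriv_sq.mono_set hsub),
    hpicone, hu.integral_div_sq_eq_add hh0 hh1.le]
  ring

theorem MemUh.mul_integral_div_sq_le {u u' : ℝ → ℝ} (hu : MemUh h u u') :
    (1 / 4 + δ ^ 2) * ∫ x in 0..1, u x ^ 2 / x ^ 2 ≤ ∫ x in 0..1, u' x ^ 2 := by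
  rw [hu.integral_deriv_sq_eq hh0 hh1 hδ hang heq]
  have hleft := hu.sq_div_le_integral_deriv_sq hh0 hh1.le
  have hright : 0 ≤ ∫ x in h..1, (u' x - hardyRiccati δ x * u x) ^ 2 :=
    intervalIntegral.integral_nonneg hh1.le fun x _ => sq_nonneg _
  linarith

theorem integral_hardyExtremalDeriv_sq :
    ∫ x in 0..1, hardyExtremalDeriv h δ x ^ 2
      = (1 / 4 + δ ^ 2) * ∫ x in 0..1, hardyExtremal h δ x ^ 2 / x ^ 2 := by
  have hleft : ∫ x in 0..h, hardyExtremalDeriv h δ x ^ 2 = hardyExtremal h δ h ^ 2 / h := by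
    rw [intervalIntegral.integral_congr_ae (g := fun _ => (hardyGroundState δ h / h) ^ 2)
      (ae_of_all _ fun x hx => by
        rw [uIoc_of_le hh0.le] at hx
        simp [hardyExtremalDeriv, hx.2]),
      intervalIntegral.integral_const, smul_eq_mul, hardyExtremal_self hh0]
    field_simp
    ring
  have hright :
      ∫ x in h..1, (hardyExtremalDeriv h δ x - hardyRiccati δ x * hardyExtremal h δ x) ^ 2 = 0 := by
    rw [intervalIntegral.integral_congr_ae (g := fun _ => 0) (ae_of_all _ fun x hx => by
        rw [uIoc_of_le hh1.le] at hx
        simp [hardyExtremalDeriv, hardyExtremal, not_le.2 hx.1]),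
      intervalIntegral.integral_zero]
  rw [(memUh_hardyExtremal hh0 hh1 hδ.le hang).integral_deriv_sq_eq hh0 hh1 hδ hang heq, hleft,
    hright]
  ring

end Hardy

theorem mu_h_eq (h δ : ℝ) (hh0 : 0 < h) (hh1 : h < 1) (hδ : 0 < δ)
    (hang : Real.arctan (1 / (2 * δ)) + δ * Real.log h ∈ Set.Ioo (-(π/2)) (π/2))
    (heq : 1/4 + δ * Real.tan (Real.arctan (1 / (2 * δ)) + δ * Real.log h) - δ ^ 2 = 0) :
    muh h = 1/4 + δ ^ 2 := by
  have hmem := memUh_hardyExtremal hh0 hh1 hδ.le hang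
  have hnz : ∃ x ∈ Icc (0 : ℝ) 1, hardyExtremal h δ x ≠ 0 :=
    ⟨h, ⟨hh0.le, hh1.le⟩,
      (hardyExtremal_self hh0).symm ▸ (hardyGroundState_pos hh0 hh1 hδ.le hang).ne'⟩
  refine IsLeast.csInf_eq ⟨⟨_, _, hmem, hnz, ?_⟩, ?_⟩
  · rw [integral_hardyExtremalDeriv_sq hh0 hh1 hδ hang heq,
      mul_div_cancel_right₀ _ (hmem.integral_div_sq_pos hh0 hh1 hnz).ne']
  · rintro _ ⟨u, u', hu, hnz, rfl⟩
    exact (le_div_iff₀ (hu.integral_div_sq_pos hh0 hh1 hnz)).2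
      (hu.mul_integral_div_sq_le hh0 hh1 hδ hang heq)
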